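/- Let N ≥ 2, let U ⊆ ℝᴺ be open, and let d : U → ℝ be three times continuously differentiable with ‖∇d(x)‖ = 1 for all x ∈ U, so that the Hessian matrix H(x) = (∂_α∂_βd(x))_{αβ} satisfies H(x)·∇d(x) = 0. Define G : U → (N×N matrices) by G(x) := Id − 2d(x)·H(x) + 2d(x)²·H(x)². Then G(x) is invertible for every x ∈ U, and for every x ∈ U and every symmetric N×N real matrix S one has Σ_{α,β} S_{αβ}·( ∂_α∂_βd(x) − Σ_γ Γ(G)^γ_{αβ}(x)·∂_γd(x) ) = d(x)·Σ_{α,β} S_{αβ}·(H(x)²)_{αβ}, where Γ(G)^γ_{αβ} := (1/2) Σ_κ (G⁻¹)^{γκ}·(∂_βG_{ακ} + ∂_αG_{βκ} − ∂_κG_{αβ}). In other words, the symmetrized Hessian of d with respect to the extended metric G equals d·(D²d)². -/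

import Mathlib

/-- The partial derivative of `f : ℝᴺ → ℝ` at `x` in the `α`-th coordinate direction. -/
noncomputable def partialDeriv18 {N : ℕ} (f : EuclideanSpace ℝ (Fin N) → ℝ) (α : Fin N)
    (x : EuclideanSpace ℝ (Fin N)) : ℝ :=
  fderiv ℝ f x (EuclideanSpace.single α 1)

/-- The Christoffel symbols `Γ(G)^γ_{αβ} = (1/2)·Σ_κ (G⁻¹)^{γκ}(∂_β G_{ακ} + ∂_α G_{βκ} - ∂_κ G_{αβ})`
of a matrix-valued metric `G`. -/
noncomputable def christoffel18 {N : ℕ}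
    (G : EuclideanSpace ℝ (Fin N) → Matrix (Fin N) (Fin N) ℝ)
    (γ α β : Fin N) (x : EuclideanSpace ℝ (Fin N)) : ℝ :=
  (1 / 2) * ∑ κ, (G x)⁻¹ γ κ *
    (partialDeriv18 (fun y => G y α κ) β x + partialDeriv18 (fun y => G y β κ) α x
      - partialDeriv18 (fun y => G y α β) κ x)

/-!
Write `p = ∇d` and `H = D²d`. Differentiating `|p|² = 1` gives `H p = 0`, hence `G p = p`; and
`2 G = 1 + (1 - 2 d H)²` is positive definite. Because `p` is fixed by `G` (hence by `G⁻¹`),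
contracting the Christoffel symbols with `p` only involves `pᵀ ∂G`. Differentiating `G p = p`
gives `Σ_κ p_κ ∂_β G_{ακ} = ((1 - G) H)_{αβ} = 2d H² - 2d² H³`. Along `p` one has `∂_p d = |p|² = 1`
and, by symmetry of third derivatives and `pᵀ H = 0`, `∂_p H = -H²`, so
`∂_p G = -2H + 6d H² - 4d² H³`. Hence `Σ_γ Γ^γ_{αβ} p_γ = H - d H²`.
-/

open Matrix Filter Topology

section Calculus

variable {F : Type*} [NormedAddCommGroup F] [NormedSpace ℝ F]

noncomputable def entrywiseFDeriv {m n : Type*} (M : F → Matrix m n ℝ) (x w : F) :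
    Matrix m n ℝ :=
  of fun i j => fderiv ℝ (fun y => M y i j) x w

theorem fderiv_apply_eq_zero_of_eventually_eq {V : Type*} [NormedAddCommGroup V]
    [NormedSpace ℝ V] {f : F → V} {x : F} {c : V} (h : ∀ᶠ y in 𝓝 x, f y = c) (w : F) :
    fderiv ℝ f x w = 0 := by
  rw [Filter.EventuallyEq.fderiv_eq (h : f =ᶠ[𝓝 x] fun _ => c)]
  simp

theorem fderiv_dotProduct_apply {ι : Type*} [Fintype ι] {u v : F → ι → ℝ} {x : F}
    (hu : ∀ i, DifferentiableAt ℝ (fun y => u y i) x)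
    (hv : ∀ i, DifferentiableAt ℝ (fun y => v y i) x) (w : F) :
    fderiv ℝ (fun y => u y ⬝ᵥ v y) x w
      = (fun i => fderiv ℝ (fun y => u y i) x w) ⬝ᵥ v x
        + u x ⬝ᵥ fun i => fderiv ℝ (fun y => v y i) x w := by
  simp only [dotProduct]
  rw [fderiv_fun_sum fun i _ => (hu i).fun_mul (hv i)]
  simp [fderiv_fun_mul (hu _) (hv _), Finset.sum_add_distrib, mul_comm, add_comm]

end Calculus

section PartialDerivatives

variable {N : ℕ} {f : EuclideanSpace ℝ (Fin N) → ℝ} {x : EuclideanSpace ℝ (Fin N)}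

theorem sum_mul_partialDeriv18 (v : Fin N → ℝ) :
    ∑ κ, v κ * partialDeriv18 f κ x = fderiv ℝ f x (WithLp.toLp 2 v) := by
  have hv : WithLp.toLp 2 v = ∑ κ, v κ • EuclideanSpace.single κ (1 : ℝ) := by
    ext i
    simp [Finset.sum_apply, Pi.single_apply]
  simp [hv, partialDeriv18, map_sum]

theorem contDiffAt_partialDeriv18 {m n : WithTop ℕ∞} (hf : ContDiffAt ℝ n f x)
    (hmn : m + 1 ≤ n) (α : Fin N) : ContDiffAt ℝ m (partialDeriv18 f α) x :=
  (hf.fderiv_right hmn).clm_apply contDiffAt_const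

theorem partialDeriv18_comm (hf : ContDiffAt ℝ 2 f x) (α β : Fin N) :
    partialDeriv18 (partialDeriv18 f β) α x = partialDeriv18 (partialDeriv18 f α) β x := by
  have hdiff : DifferentiableAt ℝ (fderiv ℝ f) x :=
    (hf.fderiv_right (m := 1) le_rfl).differentiableAt one_ne_zero
  unfold partialDeriv18
  rw [fderiv_clm_apply hdiff (differentiableAt_const _),
    fderiv_clm_apply hdiff (differentiableAt_const _)]
  simpa using hf.isSymmSndFDerivAt (by simp) _ _

end PartialDerivatives

theorem dotProduct_self_eq_norm_sq {N : ℕ} (v : Fin N → ℝ) :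
    v ⬝ᵥ v = ‖(EuclideanSpace.equiv (Fin N) ℝ).symm v‖ ^ 2 := by
  rw [← real_inner_self_eq_norm_sq, EuclideanSpace.inner_eq_star_dotProduct]
  simp

theorem Matrix.IsSymm.posDef_one_sub_two_smul_add_two_smul_mul_self {n : Type*} [Fintype n]
    [DecidableEq n] {A : Matrix n n ℝ} (hA : A.IsSymm) :
    (1 - (2 : ℝ) • A + (2 : ℝ) • (A * A)).PosDef := by
  have hsq : 1 - (2 : ℝ) • A + (2 : ℝ) • (A * A)
      = (2⁻¹ : ℝ) • (1 + (1 - (2 : ℝ) • A)ᴴ * (1 - (2 : ℝ) • A)) := by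
    rw [conjTranspose_sub, conjTranspose_one, conjTranspose_smul, star_trivial,
      (show Aᴴ = A from hA.eq)]
    simp only [sub_mul, mul_sub, one_mul, mul_one, Matrix.smul_mul, Matrix.mul_smul, smul_smul]
    module
  rw [hsq]
  exact (PosDef.one.add_posSemidef (posSemidef_conjTranspose_mul_self _)).smul (by norm_num)

theorem sum_christoffel18_mul {N : ℕ} {G : EuclideanSpace ℝ (Fin N) → Matrix (Fin N) (Fin N) ℝ}
    {x : EuclideanSpace ℝ (Fin N)} {p : Fin N → ℝ} (hG : IsUnit (G x).det) (hp : p ᵥ* G x = p)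
    (α β : Fin N) :
    ∑ γ, christoffel18 G γ α β x * p γ
      = 1 / 2 * ∑ κ, p κ * (partialDeriv18 (fun y => G y α κ) β x
          + partialDeriv18 (fun y => G y β κ) α x - partialDeriv18 (fun y => G y α β) κ x) := by
  have hpinv : p ᵥ* (G x)⁻¹ = p := by
    conv_lhs => rw [← hp]
    rw [vecMul_vecMul, mul_nonsing_inv _ hG, vecMul_one]
  conv_rhs => rw [← hpinv]
  simp only [christoffel18, vecMul, dotProduct, Finset.sum_mul, Finset.mul_sum]
  rw [Finset.sum_comm]
  exact Finset.sum_congr rfl fun _ _ => Finset.sum_congr rfl fun _ _ => by ring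

section ExtendedMetric

variable {N : ℕ}

noncomputable def partialGrad (d : EuclideanSpace ℝ (Fin N) → ℝ) (y : EuclideanSpace ℝ (Fin N)) :
    Fin N → ℝ :=
  fun κ => partialDeriv18 d κ y

noncomputable def partialHess (d : EuclideanSpace ℝ (Fin N) → ℝ) (y : EuclideanSpace ℝ (Fin N)) :
    Matrix (Fin N) (Fin N) ℝ :=
  of fun α β => partialDeriv18 (partialDeriv18 d β) α y

noncomputable def extendedMetric (d : EuclideanSpace ℝ (Fin N) → ℝ)
    (y : EuclideanSpace ℝ (Fin N)) : Matrix (Fin N) (Fin N) ℝ :=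
  1 - (2 * d y) • partialHess d y + (2 * d y ^ 2) • (partialHess d y * partialHess d y)

variable {d : EuclideanSpace ℝ (Fin N) → ℝ} {x : EuclideanSpace ℝ (Fin N)}

theorem partialHess_isSymm (hd : ContDiffAt ℝ 2 d x) : (partialHess d x).IsSymm :=
  IsSymm.ext fun α β => partialDeriv18_comm hd β α

theorem isUnit_det_extendedMetric (hd : ContDiffAt ℝ 2 d x) :
    IsUnit (extendedMetric d x).det := by
  have hG : extendedMetric d x = 1 - (2 : ℝ) • (d x • partialHess d x)
      + (2 : ℝ) • ((d x • partialHess d x) * (d x • partialHess d x)) := by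
    simp only [extendedMetric, smul_mul_smul, smul_smul]
    ring_nf
  rw [hG, ← isUnit_iff_isUnit_det]
  exact ((partialHess_isSymm hd).smul (d x)).posDef_one_sub_two_smul_add_two_smul_mul_self.isUnit

theorem differentiableAt_partialGrad (hd : ContDiffAt ℝ 2 d x) (κ : Fin N) :
    DifferentiableAt ℝ (fun y => partialGrad d y κ) x :=
  (contDiffAt_partialDeriv18 hd (m := 1) le_rfl κ).differentiableAt one_ne_zero

theorem differentiableAt_partialHess (hd : ContDiffAt ℝ 3 d x) (α β : Fin N) :
    DifferentiableAt ℝ (fun y => partialHess d y α β) x :=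
  (contDiffAt_partialDeriv18 (contDiffAt_partialDeriv18 hd (m := 2) le_rfl β) (m := 1) le_rfl α
    ).differentiableAt one_ne_zero

theorem differentiableAt_extendedMetric (hd : ContDiffAt ℝ 3 d x) (α β : Fin N) :
    DifferentiableAt ℝ (fun y => extendedMetric d y α β) x := by
  have hdx : DifferentiableAt ℝ d x := hd.differentiableAt (by norm_num)
  have hH := differentiableAt_partialHess hd
  simp only [extendedMetric, Matrix.sub_apply, Matrix.add_apply, Matrix.smul_apply, mul_apply,
    smul_eq_mul]
  fun_prop

theorem extendedMetric_mulVec_partialGrad {y : EuclideanSpace ℝ (Fin N)}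
    (h : partialHess d y *ᵥ partialGrad d y = 0) :
    extendedMetric d y *ᵥ partialGrad d y = partialGrad d y := by
  simp [extendedMetric, sub_mulVec, add_mulVec, smul_mulVec, ← mulVec_mulVec, h]

theorem partialGrad_vecMul_extendedMetric {y : EuclideanSpace ℝ (Fin N)}
    (h : partialGrad d y ᵥ* partialHess d y = 0) :
    partialGrad d y ᵥ* extendedMetric d y = partialGrad d y := by
  simp [extendedMetric, vecMul_sub, vecMul_add, vecMul_smul, ← vecMul_vecMul, h]

theorem entrywiseFDeriv_extendedMetric (hd : ContDiffAt ℝ 3 d x) (w : EuclideanSpace ℝ (Fin N)) :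
    entrywiseFDeriv (extendedMetric d) x w
      = -(2 * fderiv ℝ d x w) • partialHess d x - (2 * d x) • entrywiseFDeriv (partialHess d) x w
          + (4 * d x * fderiv ℝ d x w) • (partialHess d x * partialHess d x)
          + (2 * d x ^ 2) • (entrywiseFDeriv (partialHess d) x w * partialHess d x
            + partialHess d x * entrywiseFDeriv (partialHess d) x w) := by
  have hdx : DifferentiableAt ℝ d x := hd.differentiableAt (by norm_num)
  have hH := differentiableAt_partialHess hd
  ext α β
  simp only [entrywiseFDeriv, of_apply, extendedMetric, Matrix.sub_apply, Matrix.add_apply,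
    Matrix.smul_apply, mul_apply, smul_eq_mul]
  simp (disch := fun_prop) only [fderiv_fun_add, fderiv_fun_sub, fderiv_fun_mul, fderiv_fun_sum,
    fderiv_fun_const, fderiv_fun_pow]
  simp only [_root_.add_apply, _root_.sub_apply, _root_.smul_apply, FunLike.coe_sum,
    Finset.sum_apply, Pi.zero_apply, _root_.zero_apply, smul_eq_mul, nsmul_eq_mul,
    Finset.sum_add_distrib]
  linear_combination (2 * d x ^ 2) * Finset.sum_congr rfl fun j _ =>
    mul_comm (partialHess d x j β) (fderiv ℝ (fun y => partialHess d y α j) x w)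

theorem fderiv_apply_partialGrad (heik : ∀ᶠ y in 𝓝 x, partialGrad d y ⬝ᵥ partialGrad d y = 1) :
    fderiv ℝ d x (WithLp.toLp 2 (partialGrad d x)) = 1 := by
  rw [← sum_mul_partialDeriv18]
  exact heik.self_of_nhds

theorem partialHess_mulVec_partialGrad (hd : ContDiffAt ℝ 2 d x)
    (heik : ∀ᶠ y in 𝓝 x, partialGrad d y ⬝ᵥ partialGrad d y = 1) :
    partialHess d x *ᵥ partialGrad d x = 0 := by
  ext α
  have h := fderiv_dotProduct_apply (differentiableAt_partialGrad hd)
    (differentiableAt_partialGrad hd) (EuclideanSpace.single α 1)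
  rw [fderiv_apply_eq_zero_of_eventually_eq heik, dotProduct_comm (partialGrad d x)] at h
  change 0 = (partialHess d x *ᵥ partialGrad d x) α + (partialHess d x *ᵥ partialGrad d x) α at h
  simp only [Pi.zero_apply]
  linarith

theorem partialGrad_vecMul_partialHess (hd : ContDiffAt ℝ 2 d x)
    (heik : ∀ᶠ y in 𝓝 x, partialGrad d y ⬝ᵥ partialGrad d y = 1) :
    partialGrad d x ᵥ* partialHess d x = 0 := by
  rw [← (partialHess_isSymm hd).eq, vecMul_transpose, partialHess_mulVec_partialGrad hd heik]

theorem sum_partialGrad_mul_partialDeriv18_partialHess (hd : ContDiffAt ℝ 3 d x)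
    (heik : ∀ᶠ y in 𝓝 x, partialGrad d y ⬝ᵥ partialGrad d y = 1) (α β : Fin N) :
    ∑ κ, partialGrad d x κ * partialDeriv18 (fun y => partialHess d y κ β) α x
      = -(partialHess d x * partialHess d x) α β := by
  have hloc : ∀ᶠ y in 𝓝 x, partialGrad d y ⬝ᵥ (fun κ => partialHess d y κ β) = 0 := by
    filter_upwards [hd.eventually (by simp), heik.eventually_nhds] with y hy heiky
    exact congrFun (partialGrad_vecMul_partialHess (hy.of_le (by norm_num)) heiky) β
  have h := fderiv_dotProduct_apply (differentiableAt_partialGrad (hd.of_le (by norm_num)))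
    (fun κ => differentiableAt_partialHess hd κ β) (EuclideanSpace.single α 1)
  rw [fderiv_apply_eq_zero_of_eventually_eq hloc] at h
  change 0 = (partialHess d x * partialHess d x) α β + _ at h
  simp only [dotProduct] at h
  exact eq_neg_of_add_eq_zero_right h.symm

theorem entrywiseFDeriv_partialHess_partialGrad (hd : ContDiffAt ℝ 3 d x)
    (heik : ∀ᶠ y in 𝓝 x, partialGrad d y ⬝ᵥ partialGrad d y = 1) :
    entrywiseFDeriv (partialHess d) x (WithLp.toLp 2 (partialGrad d x))
      = -(partialHess d x * partialHess d x) := by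
  ext α β
  rw [entrywiseFDeriv, of_apply, Matrix.neg_apply, ← sum_mul_partialDeriv18,
    ← sum_partialGrad_mul_partialDeriv18_partialHess hd heik α β]
  refine Finset.sum_congr rfl fun κ _ => congrArg _ ?_
  exact partialDeriv18_comm (contDiffAt_partialDeriv18 hd (by norm_num) β) κ α

theorem sum_partialGrad_mul_partialDeriv18_extendedMetric (hd : ContDiffAt ℝ 3 d x)
    (heik : ∀ᶠ y in 𝓝 x, partialGrad d y ⬝ᵥ partialGrad d y = 1) (α β : Fin N) :
    ∑ κ, partialGrad d x κ * partialDeriv18 (fun y => extendedMetric d y α κ) β x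
      = ((1 - extendedMetric d x) * partialHess d x) α β := by
  have hd2 : ContDiffAt ℝ 2 d x := hd.of_le (by norm_num)
  have hloc : (fun y => (fun κ => extendedMetric d y α κ) ⬝ᵥ partialGrad d y)
      =ᶠ[𝓝 x] fun y => partialGrad d y α := by
    filter_upwards [hd.eventually (by simp), heik.eventually_nhds] with y hy heiky
    exact congrFun (extendedMetric_mulVec_partialGrad
      (partialHess_mulVec_partialGrad (hy.of_le (by norm_num)) heiky)) α
  have h : fderiv ℝ (fun y => (fun κ => extendedMetric d y α κ) ⬝ᵥ partialGrad d y) x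
      (EuclideanSpace.single β 1) = partialHess d x α β := by
    rw [hloc.fderiv_eq]
    exact (partialHess_isSymm hd2).apply α β
  have hcol : (fun κ => fderiv ℝ (fun y => partialGrad d y κ) x (EuclideanSpace.single β 1))
      = fun κ => partialHess d x κ β :=
    funext fun κ => (partialHess_isSymm hd2).apply κ β
  rw [fderiv_dotProduct_apply (differentiableAt_extendedMetric hd α)
    (differentiableAt_partialGrad hd2), hcol, dotProduct_comm] at h
  rw [sub_mul, one_mul, Matrix.sub_apply, mul_apply', ← h]
  simp [partialDeriv18, dotProduct]

theorem sum_christoffel18_extendedMetric_mul_partialGrad (hd : ContDiffAt ℝ 3 d x)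
    (heik : ∀ᶠ y in 𝓝 x, partialGrad d y ⬝ᵥ partialGrad d y = 1) (α β : Fin N) :
    ∑ γ, christoffel18 (extendedMetric d) γ α β x * partialGrad d x γ
      = partialHess d x α β - d x * (partialHess d x * partialHess d x) α β := by
  have hd2 : ContDiffAt ℝ 2 d x := hd.of_le (by norm_num)
  set H := partialHess d x with hH
  have hsymm : H.IsSymm := partialHess_isSymm hd2
  have hX : (1 - extendedMetric d x) * H = (2 * d x) • H ^ 2 - (2 * d x ^ 2) • H ^ 3 := by
    simp only [extendedMetric, ← hH]
    noncomm_ring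
  have hY : entrywiseFDeriv (extendedMetric d) x (WithLp.toLp 2 (partialGrad d x))
      = (-2 : ℝ) • H + (6 * d x) • H ^ 2 - (4 * d x ^ 2) • H ^ 3 := by
    rw [entrywiseFDeriv_extendedMetric hd, entrywiseFDeriv_partialHess_partialGrad hd heik,
      fderiv_apply_partialGrad heik, ← hH]
    simp only [pow_succ, pow_zero, Matrix.one_mul, neg_mul, mul_neg, Matrix.mul_assoc]
    module
  rw [sum_christoffel18_mul (isUnit_det_extendedMetric hd2)
    (partialGrad_vecMul_extendedMetric (partialGrad_vecMul_partialHess hd2 heik))]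
  simp only [mul_add, mul_sub, Finset.sum_add_distrib, Finset.sum_sub_distrib]
  rw [sum_partialGrad_mul_partialDeriv18_extendedMetric hd heik,
    sum_partialGrad_mul_partialDeriv18_extendedMetric hd heik, sum_mul_partialDeriv18, ← hH]
  change _ - _ * entrywiseFDeriv (extendedMetric d) x _ α β = _
  rw [hX, hY]
  simp only [Matrix.add_apply, Matrix.sub_apply, Matrix.smul_apply, smul_eq_mul]
  rw [(hsymm.pow 2).apply α β, (hsymm.pow 3).apply α β, sq H]
  ring

end ExtendedMetric

theorem extended_metric_hessian_of_signed_distance_general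
    {N : ℕ}
    (U : Set (EuclideanSpace ℝ (Fin N))) (hU : IsOpen U)
    (d : EuclideanSpace ℝ (Fin N) → ℝ) (hd : ContDiffOn ℝ 3 d U)
    (hgrad : ∀ x ∈ U,
      ‖((EuclideanSpace.equiv (Fin N) ℝ).symm fun α => partialDeriv18 d α x)‖ = 1)
    (H : EuclideanSpace ℝ (Fin N) → Matrix (Fin N) (Fin N) ℝ)
    (hH : ∀ x α β, H x α β = partialDeriv18 (fun y => partialDeriv18 d β y) α x)
    (G : EuclideanSpace ℝ (Fin N) → Matrix (Fin N) (Fin N) ℝ)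
    (hG : ∀ x, G x = (1 : Matrix (Fin N) (Fin N) ℝ)
      - (2 * d x) • H x + (2 * d x ^ 2) • (H x * H x)) :
    ∀ x ∈ U,
      IsUnit (G x).det ∧
      ∀ S : Matrix (Fin N) (Fin N) ℝ, S.IsSymm →
        ∑ α, ∑ β, S α β *
            (partialDeriv18 (fun y => partialDeriv18 d β y) α x
              - ∑ γ, christoffel18 G γ α β x * partialDeriv18 d γ x)
          = d x * ∑ α, ∑ β, S α β * (H x * H x) α β := by
  intro x hx
  obtain rfl : H = partialHess d := funext fun y => ext fun α β => hH y α β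
  obtain rfl : G = extendedMetric d := funext hG
  have hdx : ContDiffAt ℝ 3 d x := hd.contDiffAt (hU.mem_nhds hx)
  have heik : ∀ᶠ y in 𝓝 x, partialGrad d y ⬝ᵥ partialGrad d y = 1 := by
    filter_upwards [hU.mem_nhds hx] with y hy
    rw [dotProduct_self_eq_norm_sq, ← one_pow 2, ← hgrad y hy]
    rfl
  refine ⟨isUnit_det_extendedMetric (hdx.of_le (by norm_num)), fun S _ => ?_⟩
  have hterm : ∀ α β, partialDeriv18 (fun y => partialDeriv18 d β y) α x
      - ∑ γ, christoffel18 (extendedMetric d) γ α β x * partialDeriv18 d γ x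
        = d x * (partialHess d x * partialHess d x) α β := fun α β => by
    have hΓ : ∑ γ, christoffel18 (extendedMetric d) γ α β x * partialDeriv18 d γ x = _ :=
      sum_christoffel18_extendedMetric_mul_partialGrad hdx heik α β
    rw [hΓ]
    exact sub_sub_cancel _ _
  simp only [hterm, Finset.mul_sum, mul_left_comm]

/-- For the extended metric `G = Id - 2d·D²d + 2d²·(D²d)²` built from a function `d`
satisfying the eikonal equation `‖∇d‖ = 1`, the matrix `G(x)` is invertible and the
symmetrized Hessian of `d` with respect to `G` equals `d·(D²d)²`. -/
theorem extended_metric_hessian_of_signed_distance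
    {N : ℕ} (hN : 2 ≤ N)
    (U : Set (EuclideanSpace ℝ (Fin N))) (hU : IsOpen U)
    (d : EuclideanSpace ℝ (Fin N) → ℝ) (hd : ContDiffOn ℝ 3 d U)
    (hgrad : ∀ x ∈ U,
      ‖((EuclideanSpace.equiv (Fin N) ℝ).symm fun α => partialDeriv18 d α x)‖ = 1)
    (H : EuclideanSpace ℝ (Fin N) → Matrix (Fin N) (Fin N) ℝ)
    (hH : ∀ x α β, H x α β = partialDeriv18 (fun y => partialDeriv18 d β y) α x)
    (hHgrad : ∀ x ∈ U, ∀ α : Fin N, ∑ β, H x α β * partialDeriv18 d β x = 0)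
    (G : EuclideanSpace ℝ (Fin N) → Matrix (Fin N) (Fin N) ℝ)
    (hG : ∀ x, G x = (1 : Matrix (Fin N) (Fin N) ℝ)
      - (2 * d x) • H x + (2 * d x ^ 2) • (H x * H x)) :
    ∀ x ∈ U,
      IsUnit (G x).det ∧
      ∀ S : Matrix (Fin N) (Fin N) ℝ, S.IsSymm →
        ∑ α, ∑ β, S α β *
            (partialDeriv18 (fun y => partialDeriv18 d β y) α x
              - ∑ γ, christoffel18 G γ α β x * partialDeriv18 d γ x)
          = d x * ∑ α, ∑ β, S α β * (H x * H x) α β :=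
  extended_metric_hessian_of_signed_distance_general U hU d hd hgrad H hH G hG
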